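/- arXiv:2202.04792 — 2 statements merged into one kernel-verified Lean document; each statement's English description precedes it below -/
import Mathlib

section
/- Let R be a commutative Noetherian local ring and M a finitely generated R-module such that Tor_1^R(M, Tr M) = 0, where Tr M is the Auslander transpose of M. Then M is free. -/
open CategoryTheory IsLocalRing

noncomputable section

variable (R : Type) [CommRing R]

/-- `Tor_i^R(M,N)` as a type. -/
abbrev TorM (i : ℕ) (M N : Type) [AddCommGroup M] [Module R M]
    [AddCommGroup N] [Module R N] : Type :=
  ((Tor (ModuleCat R) i).obj (ModuleCat.of R M)).obj (ModuleCat.of R N)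

/-- `Ext^i_R(M,N)` as a type. -/
abbrev ExtM (i : ℕ) (M N : Type) [AddCommGroup M] [Module R M]
    [AddCommGroup N] [Module R N] : Type :=
  ((Ext R (ModuleCat R) i).obj (Opposite.op (ModuleCat.of R M))).obj (ModuleCat.of R N)

/-- `M` is isomorphic to its `q`-th syzygy `Ω^q M` in a minimal free resolution. -/
def IsPeriodicSyzygy [IsLocalRing R] (M : Type) [AddCommGroup M] [Module R M]
    (q : ℕ) : Prop :=
  ∃ (n : ℕ → ℕ) (d : ∀ i : ℕ, ((Fin (n (i + 1)) → R) →ₗ[R] (Fin (n i) → R)))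
    (g : (Fin (n 0) → R) →ₗ[R] M),
    Function.Surjective g ∧
    LinearMap.ker g = LinearMap.range (d 0) ∧
    (∀ i, LinearMap.ker (d i) = LinearMap.range (d (i + 1))) ∧
    LinearMap.ker g ≤ (maximalIdeal R) • (⊤ : Submodule R (Fin (n 0) → R)) ∧
    (∀ i, LinearMap.range (d i) ≤ (maximalIdeal R) • (⊤ : Submodule R (Fin (n i) → R))) ∧
    Nonempty (M ≃ₗ[R] LinearMap.range (d (q - 1)))

/-- `M` is locally free on the punctured spectrum of the local ring `R`. -/
def LocFreePunctured [IsLocalRing R] (M : Type) [AddCommGroup M] [Module R M] : Prop :=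
  ∀ (p : Ideal R) (_ : p.IsPrime), p ≠ maximalIdeal R →
    Module.Free (Localization.AtPrime p) (LocalizedModule p.primeCompl M)

/-- index type parametrizing all finitely generated `R`-modules (via presentations) -/
abbrev FGIdx := Σ n : ℕ, Submodule R (Fin n → R)

abbrev idxMod (x : FGIdx R) : Type := (Fin x.1 → R) ⧸ x.2

/-- relations (from short exact sequences) defining the Grothendieck group, ℚ-coefficients -/
def gRelQ : Set (FGIdx R →₀ ℚ) :=
  { v | ∃ (x y z : FGIdx R) (f : idxMod R x →ₗ[R] idxMod R y)
      (g : idxMod R y →ₗ[R] idxMod R z),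
      Function.Injective f ∧ Function.Surjective g ∧
      LinearMap.range f = LinearMap.ker g ∧
      v = Finsupp.single y 1 - Finsupp.single x 1 - Finsupp.single z 1 }

/-- relations defining the reduced Grothendieck group with ℚ-coefficients:
SES relations together with the class of `R` itself. -/
def gRelQbar : Set (FGIdx R →₀ ℚ) :=
  gRelQ R ∪ { v | ∃ x : FGIdx R, Nonempty (idxMod R x ≃ₗ[R] R) ∧ v = Finsupp.single x 1 }

/-- The reduced Grothendieck group with rational coefficients `Ḡ(R)_ℚ`. -/
abbrev GbarQ : Type := (FGIdx R →₀ ℚ) ⧸ Submodule.span ℚ (gRelQbar R)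

/-- `[N] = 0` in the reduced Grothendieck group with rational coefficients. -/
def ClassZeroQ (N : Type) [AddCommGroup N] [Module R N] : Prop :=
  ∀ x : FGIdx R, Nonempty (idxMod R x ≃ₗ[R] N) →
    (Submodule.Quotient.mk (p := Submodule.span ℚ (gRelQbar R))
      (Finsupp.single x 1) : GbarQ R) = 0

/-- relations (from short exact sequences) defining the Grothendieck group `G(R)` -/
def gRelZ : Set (FGIdx R →₀ ℤ) :=
  { v | ∃ (x y z : FGIdx R) (f : idxMod R x →ₗ[R] idxMod R y)
      (g : idxMod R y →ₗ[R] idxMod R z),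
      Function.Injective f ∧ Function.Surjective g ∧
      LinearMap.range f = LinearMap.ker g ∧
      v = Finsupp.single y 1 - Finsupp.single x 1 - Finsupp.single z 1 }

/-- The Grothendieck group `G(R)` of finitely generated `R`-modules. -/
abbrev GZ : Type := (FGIdx R →₀ ℤ) ⧸ Submodule.span ℤ (gRelZ R)

open Classical in
noncomputable def gcl (N : Type) [AddCommGroup N] [Module R N] : GZ R :=
  if h : ∃ x : FGIdx R, Nonempty (idxMod R x ≃ₗ[R] N) then
    Submodule.Quotient.mk (p := Submodule.span ℤ (gRelZ R)) (Finsupp.single h.choose 1)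
  else 0

/-- `[N] = 0` in the Grothendieck group `G(R)`. -/
def ClassZeroZ (N : Type) [AddCommGroup N] [Module R N] : Prop :=
  ∀ x : FGIdx R, Nonempty (idxMod R x ≃ₗ[R] N) →
    (Submodule.Quotient.mk (p := Submodule.span ℤ (gRelZ R))
      (Finsupp.single x 1) : GZ R) = 0

/-- the residue field of a local ring, as an `R`-module -/
abbrev resF [IsLocalRing R] : Type := R ⧸ (maximalIdeal R)

/-- `R` is a Gorenstein local ring of Krull dimension `d`
(characterized by `Ext^i_R(k,R) = 0` for `i ≠ d` and `Ext^d_R(k,R) ≅ k`). -/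
def IsGorensteinOfDim [IsLocalRing R] (d : ℕ) : Prop :=
  ringKrullDim R = d ∧
  (∀ i : ℕ, i ≠ d → Subsingleton (ExtM R i (resF R) R)) ∧
  Nonempty ((ExtM R d (resF R) R) ≃ₗ[R] resF R)

/-- `R` is a Cohen-Macaulay local ring of Krull dimension `d` (depth R = dim R = d,
depth computed via `Ext^i(k,R)`). -/
def IsCMOfDim [IsLocalRing R] (d : ℕ) : Prop :=
  ringKrullDim R = d ∧
  (∀ i : ℕ, i < d → Subsingleton (ExtM R i (resF R) R)) ∧
  Nontrivial (ExtM R d (resF R) R)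

/-- `ω` is a canonical module of the `d`-dimensional Cohen-Macaulay local ring `R`. -/
def IsCanonicalModule [IsLocalRing R] (d : ℕ) (ω : Type) [AddCommGroup ω] [Module R ω] : Prop :=
  Module.Finite R ω ∧
  (∀ i : ℕ, i ≠ d → Subsingleton (ExtM R i (resF R) ω)) ∧
  Nonempty ((ExtM R d (resF R) ω) ≃ₗ[R] resF R)

/-- `M` has depth `d` and is maximal Cohen-Macaulay over the `d`-dimensional local ring `R`
(depth computed via `Ext^i(k,M)`). -/
def IsMCM [IsLocalRing R] (d : ℕ) (M : Type) [AddCommGroup M] [Module R M] : Prop :=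
  (∀ i : ℕ, i < d → Subsingleton (ExtM R i (resF R) M)) ∧
  Nontrivial (ExtM R d (resF R) M)

/-- `M` has a free resolution of length at most `k` (so `pd_R M ≤ k`). -/
def PdLE (M : Type) [AddCommGroup M] [Module R M] (k : ℕ) : Prop :=
  ∃ (n : ℕ → ℕ) (d : ∀ i : ℕ, ((Fin (n (i + 1)) → R) →ₗ[R] (Fin (n i) → R)))
    (g : (Fin (n 0) → R) →ₗ[R] M),
    Function.Surjective g ∧
    LinearMap.ker g = LinearMap.range (d 0) ∧
    (∀ i, LinearMap.ker (d i) = LinearMap.range (d (i + 1))) ∧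
    (∀ i, k < i → n i = 0)

/-- `G` is a totally reflexive `R`-module. -/
def IsTotallyReflexive (G : Type) [AddCommGroup G] [Module R G] : Prop :=
  Module.Finite R G ∧
  Function.Bijective (Module.Dual.eval R G) ∧
  (∀ i : ℕ, 1 ≤ i → Subsingleton (ExtM R i G R)) ∧
  (∀ i : ℕ, 1 ≤ i → Subsingleton (ExtM R i (Module.Dual R G) R))

/-- `M` has a resolution by totally reflexive modules of length at most `g`
(so `Gdim_R M ≤ g`). -/
def GdimLE (M : Type) [AddCommGroup M] [Module R M] (g : ℕ) : Prop :=
  ∃ (G : ℕ → ModuleCat R) (d : ∀ i : ℕ, ((G (i + 1) : Type) →ₗ[R] (G i : Type)))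
    (ε : (G 0 : Type) →ₗ[R] M),
    (∀ i, IsTotallyReflexive R (G i)) ∧
    Function.Surjective ε ∧
    LinearMap.ker ε = LinearMap.range (d 0) ∧
    (∀ i, LinearMap.ker (d i) = LinearMap.range (d (i + 1))) ∧
    (∀ i, g < i → Subsingleton (G i : Type))

open Classical in
noncomputable def mlen (M : Type) [AddCommGroup M] [Module R M] : ℕ :=
  if h : ∃ s : CompositionSeries (Submodule R M), s.head = ⊥ ∧ s.last = ⊤ then
    h.choose.length
  else 0

/-- Hochster's theta invariant `θ(M,N)` computed using `Tor_{2n}` and `Tor_{2n-1}`. -/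
noncomputable def theta (M N : Type) [AddCommGroup M] [Module R M]
    [AddCommGroup N] [Module R N] (n : ℕ) : ℤ :=
  (mlen R (TorM R (2 * n) M N) : ℤ) - (mlen R (TorM R (2 * n - 1) M N) : ℤ)

/-- `C` has rank `r`: localization at every associated prime of `R` is free of rank `r`. -/
def HasRankN (C : Type) [AddCommGroup C] [Module R C] (r : ℕ) : Prop :=
  ∀ (p : Ideal R) (_ : p.IsPrime), p ∈ associatedPrimes R R →
    Nonempty ((LocalizedModule p.primeCompl C) ≃ₗ[Localization.AtPrime p]
      (Fin r → Localization.AtPrime p))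

end

/-!
Put `u = d^*` and identify `M ⊗ F^*` with `Hom(F, M)` for the finite free modules `F = F₀, F₁`;
then `1 ⊗ u` becomes precomposition with `d`, so `g` is an element of `M ⊗ F₀^*` killed by
`1 ⊗ u`. In the resolution `⋯ → P₂ → F₀^* → F₁^* → Tr M → 0` the image of `P₂` is
`ker u ≅ M^*`, so `Tor_1(M, Tr M) = 0` says that this element comes from `M ⊗ M^*`.
The resulting expression of `g` through functionals on `M` writes `id_M` as an element of
`M^* ⊗ M`, hence `M` is projective, and a finite projective module over a local ring is free.
-/

open CategoryTheory.Limits MonoidalCategory TensorProduct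

universe u

namespace ModuleCat

variable {R : Type u} [CommRing R] {P₀ P₁ : ModuleCat.{u} R} (f : P₁ ⟶ P₀)

noncomputable def presentationComplex : ChainComplex (ModuleCat.{u} R) ℕ :=
  ChainComplex.mk' P₀ P₁ f fun g =>
    ⟨_, Projective.d g, by erw [Category.assoc, kernel.condition, comp_zero]⟩

theorem presentationComplex_d_one_zero : (presentationComplex f).d 1 0 = f := by
  simp [presentationComplex]

theorem presentationComplex_exactAt_succ (n : ℕ) : (presentationComplex f).ExactAt (n + 1) := by
  rw [HomologicalComplex.exactAt_iff' _ (n + 1 + 1) (n + 1) n (by simp) (by simp)]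
  dsimp [presentationComplex, HomologicalComplex.sc', HomologicalComplex.shortComplexFunctor',
    ChainComplex.mk', ChainComplex.mk]
  match n with
  | 0 => exact exact_d_f f
  | n + 1 =>
    dsimp [ChainComplex.of, ChainComplex.of.d]
    simp only [if_true]
    exact exact_d_f _

instance [Projective P₀] [Projective P₁] (n : ℕ) : Projective ((presentationComplex f).X n) := by
  obtain (_ | _ | _ | n) := n
  · dsimp [presentationComplex]; infer_instance
  · dsimp [presentationComplex]; infer_instance
  · apply Projective.projective_over
  · apply Projective.projective_over

noncomputable def projectiveResolutionOfPresentation [Projective P₀] [Projective P₁] {X : ModuleCat.{u} R}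
    (π : P₀ ⟶ X) [Epi π] (w : f ≫ π = 0) (hexact : (ShortComplex.mk f π w).Exact) :
    ProjectiveResolution X where
  complex := presentationComplex f
  π := (ChainComplex.toSingle₀Equiv _ _).symm
    ⟨π, by erw [presentationComplex_d_one_zero]; exact w⟩
  quasiIso := ⟨fun n => by
    cases n
    · rw [ChainComplex.quasiIsoAt₀_iff, ShortComplex.quasiIso_iff_of_zeros']
      · refine (ShortComplex.exact_and_epi_g_iff_of_iso ?_).2 ⟨hexact, ‹_›⟩
        exact ShortComplex.isoMk (Iso.refl _) (Iso.refl _) (Iso.refl _)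
          (by dsimp; rfl) (by dsimp; rfl)
      all_goals rfl
    · rw [quasiIsoAt_iff_exactAt']
      · apply presentationComplex_exactAt_succ
      · apply ChainComplex.exactAt_succ_single_obj⟩

end ModuleCat

namespace LinearMap

section Tensor

variable {R : Type*} [CommRing R] (M : Type*) {A B C : Type*} [AddCommGroup M] [Module R M]
  [AddCommGroup A] [Module R A] [AddCommGroup B] [Module R B] [AddCommGroup C] [Module R C]

theorem range_lTensor_le_range_lTensor_ker_subtype {f : A →ₗ[R] B} {u : B →ₗ[R] C}
    (h : u ∘ₗ f = 0) : range (f.lTensor M) ≤ range ((ker u).subtype.lTensor M) := by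
  have hf : f = (ker u).subtype ∘ₗ f.codRestrict _ fun x => congr($h x) := rfl
  rw [hf, lTensor_comp]
  exact range_comp_le_range _ _

end Tensor

theorem ker_lTensor_le_range_lTensor_ker_subtype {R : Type} [CommRing R]
    {M B C : Type} [AddCommGroup M] [Module R M] [AddCommGroup B] [Module R B]
    [AddCommGroup C] [Module R C] [Module.Projective R B] [Module.Projective R C]
    (u : B →ₗ[R] C) (hTor : Subsingleton (TorM R 1 M (C ⧸ range u))) :
    ker (u.lTensor M) ≤ range ((ker u).subtype.lTensor M) := by
  have : Projective (ModuleCat.of R B) := (IsProjective.iff_projective B).mp ‹_›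
  have : Projective (ModuleCat.of R C) := (IsProjective.iff_projective C).mp ‹_›
  have : Epi (ModuleCat.ofHom (range u).mkQ) :=
    (ModuleCat.epi_iff_surjective _).2 (Submodule.mkQ_surjective _)
  have w : ModuleCat.ofHom u ≫ ModuleCat.ofHom (range u).mkQ = 0 := by
    ext x
    exact (Submodule.Quotient.mk_eq_zero _).2 (mem_range_self u x)
  let P := ModuleCat.projectiveResolutionOfPresentation _ _ w <| by
    rw [ShortComplex.moduleCat_exact_iff]
    exact fun x hx => (Submodule.Quotient.mk_eq_zero _).1 hx
  let F := (tensoringLeft (ModuleCat R)).obj (ModuleCat.of R M)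
  have hexact : ((F.mapHomologicalComplex _).obj P.complex).ExactAt 1 :=
    (HomologicalComplex.exactAt_iff_isZero_homology _ _).2 <|
      (@ModuleCat.isZero_of_subsingleton _ _ _ hTor).of_iso (P.isoLeftDerivedObj F 1).symm
  rw [HomologicalComplex.exactAt_iff' _ 2 1 0 (by simp) (by simp),
    ShortComplex.moduleCat_exact_iff] at hexact
  have hd₁₀ : P.complex.d 1 0 = ModuleCat.ofHom u := ModuleCat.presentationComplex_d_one_zero _
  have hd₂₁ : u ∘ₗ (P.complex.d 2 1).hom = 0 := by
    have h := P.complex.d_comp_d 2 1 0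
    rw [hd₁₀] at h
    exact congr(ModuleCat.Hom.hom $h)
  intro t ht
  obtain ⟨s, rfl⟩ := hexact t <| by
    change (F.map (P.complex.d 1 0)).hom t = 0
    rw [hd₁₀]
    exact ht
  exact range_lTensor_le_range_lTensor_ker_subtype M hd₂₁ (mem_range_self _ s)

section Presentation

variable {R : Type*} [CommRing R] {F₀ F₁ M : Type*} [AddCommGroup F₀] [Module R F₀]
  [AddCommGroup F₁] [Module R F₁] [AddCommGroup M] [Module R M]
  {d : F₁ →ₗ[R] F₀} {g : F₀ →ₗ[R] M}

noncomputable def dualEquivKerDualMap (hg : Function.Surjective g) (hkg : ker g = range d) :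
    Module.Dual R M ≃ₗ[R] ker d.dualMap :=
  (LinearEquiv.ofInjective g.dualMap (dualMap_injective_of_surjective hg)).trans <|
    LinearEquiv.ofEq _ _ <| by
      rw [g.range_dualMap_eq_dualAnnihilator_ker_of_surjective hg,
        d.ker_dualMap_eq_dualAnnihilator_range, hkg]

theorem dualMap_comp_dualEquivKerDualMap_symm (hg : Function.Surjective g)
    (hkg : ker g = range d) :
    g.dualMap ∘ₗ (dualEquivKerDualMap hg hkg).symm.toLinearMap = (ker d.dualMap).subtype := by
  ext φ : 1
  obtain ⟨ψ, rfl⟩ := (dualEquivKerDualMap hg hkg).surjective φ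
  simp [dualEquivKerDualMap]

end Presentation

end LinearMap

namespace Module.Projective

variable {R : Type*} [CommRing R] {F₀ F₁ M : Type*} [AddCommGroup F₀] [Module R F₀]
  [AddCommGroup F₁] [Module R F₁] [AddCommGroup M] [Module R M]
  {d : F₁ →ₗ[R] F₀} {g : F₀ →ₗ[R] M}

theorem of_ker_lTensor_dualMap_le_range [Module.Finite R F₀] [Module.Projective R F₀]
    [Module.Finite R F₁] [Module.Projective R F₁]
    (hg : Function.Surjective g) (hkg : LinearMap.ker g = LinearMap.range d)
    (hex : LinearMap.ker (d.dualMap.lTensor M) ≤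
      LinearMap.range ((LinearMap.ker d.dualMap).subtype.lTensor M)) :
    Module.Projective R M := by
  apply of_one_mem_range_dualTensorHom
  set t := (dualTensorHomEquiv R F₀ M).symm g
  have ht : dualTensorHom R F₀ M t = g := (dualTensorHomEquiv R F₀ M).apply_symm_apply g
  have htd : d.dualMap.rTensor M t = 0 := by
    apply (dualTensorHomEquiv R F₁ M).injective
    change dualTensorHom R F₁ M _ = dualTensorHom R F₁ M 0
    rw [← LinearMap.comp_apply, dualTensorHom_comp_rTensor_dualMap, LinearMap.comp_apply, ht,
      map_zero]
    exact LinearMap.range_le_ker_iff.1 hkg.ge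
  obtain ⟨s, hs⟩ := hex (show TensorProduct.comm R _ M t ∈ _ by
    rw [LinearMap.mem_ker, LinearMap.lTensor_comm, htd, map_zero])
  set e := LinearMap.dualEquivKerDualMap hg hkg
  refine ⟨(e.symm.toLinearMap.rTensor M) (TensorProduct.comm R M _ s), ?_⟩
  rw [← LinearMap.cancel_right hg]
  calc _ = dualTensorHom R F₀ M
          (g.dualMap.rTensor M (e.symm.toLinearMap.rTensor M (TensorProduct.comm R M _ s))) :=
        (congr($(dualTensorHom_comp_rTensor_dualMap (R := R) (P := M) g) _)).symm
    _ = dualTensorHom R F₀ M t := by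
        rw [← LinearMap.rTensor_comp_apply, LinearMap.dualMap_comp_dualEquivKerDualMap_symm,
          LinearMap.rTensor_comm, hs, TensorProduct.comm_comm]
    _ = _ := by rw [ht]; rfl

end Module.Projective

theorem free_of_tor_one_transpose_vanishes_general
    (R : Type) [CommRing R] [IsLocalRing R]
    (M : Type) [AddCommGroup M] [Module R M] [Module.Finite R M]
    (n₀ n₁ : ℕ)
    (d : (Fin n₁ → R) →ₗ[R] (Fin n₀ → R)) (g : (Fin n₀ → R) →ₗ[R] M)
    (hg : Function.Surjective g) (hkg : LinearMap.ker g = LinearMap.range d)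
    (hTor : Subsingleton (TorM R 1 M
      (Module.Dual R (Fin n₁ → R) ⧸ LinearMap.range d.dualMap))) :
    Module.Free R M := by
  have : Module.Projective R M := .of_ker_lTensor_dualMap_le_range hg hkg
    (LinearMap.ker_lTensor_le_range_lTensor_ker_subtype d.dualMap hTor)
  exact Module.free_of_flat_of_isLocalRing

theorem free_of_tor_one_transpose_vanishes
    (R : Type) [CommRing R] [IsNoetherianRing R] [IsLocalRing R]
    (M : Type) [AddCommGroup M] [Module R M] [Module.Finite R M]
    (n₀ n₁ : ℕ)
    (d : (Fin n₁ → R) →ₗ[R] (Fin n₀ → R)) (g : (Fin n₀ → R) →ₗ[R] M)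
    (hg : Function.Surjective g) (hkg : LinearMap.ker g = LinearMap.range d)
    (hmin0 : LinearMap.ker g ≤ (maximalIdeal R) • (⊤ : Submodule R (Fin n₀ → R)))
    (hmin1 : LinearMap.ker d ≤ (maximalIdeal R) • (⊤ : Submodule R (Fin n₁ → R)))
    (hTor : Subsingleton (TorM R 1 M
      (Module.Dual R (Fin n₁ → R) ⧸ LinearMap.range d.dualMap))) :
    Module.Free R M :=
  free_of_tor_one_transpose_vanishes_general R M n₀ n₁ d g hg hkg hTor
end

section
/- Let R be a one-dimensional commutative Noetherian local ring and N a finitely generated R-module that has rank. Then [N] = 0 in the reduced Grothendieck group with rational coefficients Ḡ(R)_ℚ. In particular, if R is a one-dimensional local domain, [N] = 0 in Ḡ(R)_ℚ for every finitely generated R-module N. -/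
open CategoryTheory IsLocalRing

/-!
Choose `φ : Rʳ → N` that becomes bijective after localizing at each prime of a finite antichain
`s ⊆ Ass R` such that every associated prime lies in a member of `s`: local bases of the `Nₚ`
are glued by prime avoidance and Nakayama. Then `φ` is injective, so
`[N] = r • [R] + [coker φ] = [coker φ]`. If `𝔪 ∈ Ass R`, take `s = {𝔪}`; `coker φ` vanishes at
`𝔪`, hence everywhere. Otherwise, since `dim R = 1`, the associated primes are the minimal ones;
with `s = Ass R` the cokernel is supported at `𝔪`, so its class is a multiple of `[k]`. Finally
`[k] = 0`: for a nonzerodivisor `x ∈ 𝔪` the sequence `0 → R → R → R/x → 0` gives `[R/x] = 0`,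
while `R/x` is nonzero and supported at `𝔪`.
-/

section AssociatedPrimes

variable {R : Type*} [CommRing R]

theorem exists_mem_nonZeroDivisors_of_notMem_associatedPrimes [IsNoetherianRing R] {I : Ideal R}
    (hI : ∀ p ∈ associatedPrimes R R, ¬ I ≤ p) : ∃ x ∈ I, x ∈ nonZeroDivisors R := by
  by_contra! h
  obtain ⟨p, hp, hIp⟩ := (Ideal.subset_union_prime_finite (associatedPrimes.finite R R)
    (f := id) 0 0 fun p hp _ _ ↦ hp.isPrime).mp (by
      simp_rw [id, biUnion_associatedPrimes_eq_compl_nonZeroDivisors]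
      exact fun x hx ↦ h x hx)
  exact hI p hp hIp

variable [IsLocalRing R] [Ring.KrullDimLE 1 R]

theorem mem_minimalPrimes_of_ne_closedPoint {p : PrimeSpectrum R} (hp : p ≠ closedPoint R) :
    p.asIdeal ∈ minimalPrimes R :=
  (Ring.krullDimLE_one_iff.mp inferInstance p.asIdeal p.2).resolve_right fun hmax ↦
    hp (PrimeSpectrum.ext (eq_maximalIdeal hmax))

theorem mem_associatedPrimes_of_ne_closedPoint [IsNoetherianRing R] {p : PrimeSpectrum R}
    (hp : p ≠ closedPoint R) :
    p.asIdeal ∈ associatedPrimes R R := by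
  apply Module.associatedPrimes.minimalPrimes_annihilator_subset_associatedPrimes R R
  simpa [Module.annihilator_eq_bot.mpr inferInstance] using mem_minimalPrimes_of_ne_closedPoint hp

theorem support_quotient_span_singleton_subset [IsNoetherianRing R] {x : R}
    (hx : x ∈ nonZeroDivisors R) :
    Module.support R (R ⧸ Ideal.span {x}) ⊆ {closedPoint R} := by
  intro p hp
  rw [Module.mem_support_iff_of_finite, Ideal.annihilator_quotient,
    Ideal.span_singleton_le_iff_mem] at hp
  by_contra hne
  have hzd : x ∈ ⋃ q ∈ associatedPrimes R R, (q : Set R) :=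
    Set.mem_biUnion (mem_associatedPrimes_of_ne_closedPoint hne) hp
  rw [biUnion_associatedPrimes_eq_compl_nonZeroDivisors] at hzd
  exact hzd hx

end AssociatedPrimes

section LocalizedMap

variable {R : Type*} [CommRing R]

theorem PrimeSpectrum.exists_notMem_forall_mem_of_isAntichain {s : Finset (PrimeSpectrum R)}
    (hs : IsAntichain (· ≤ ·) (s : Set (PrimeSpectrum R))) {p : PrimeSpectrum R} (hp : p ∈ s) :
    ∃ e ∉ p.asIdeal, ∀ q ∈ s, q ≠ p → e ∈ q.asIdeal := by
  classical
  by_contra! h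
  obtain ⟨q, hq, hqp⟩ := (Ideal.IsPrime.inf_le' (s := s.erase p) (f := PrimeSpectrum.asIdeal)
    p.2).mp fun e he ↦ by
      by_contra hep
      obtain ⟨q, hq, hqp, heq⟩ := h e hep
      exact heq (Finset.inf_le (f := PrimeSpectrum.asIdeal) (Finset.mem_erase.mpr ⟨hqp, hq⟩) he)
  exact hs (Finset.mem_of_mem_erase hq) hp (Finset.ne_of_mem_erase hq) hqp

variable {M N : Type*} [AddCommGroup M] [Module R M] [AddCommGroup N] [Module R N]

theorem exists_surjective_localizedMap_of_isAntichain [Module.Finite R N]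
    {s : Finset (PrimeSpectrum R)} (hs : IsAntichain (· ≤ ·) (s : Set (PrimeSpectrum R)))
    (h : ∀ p ∈ s, ∃ g : M →ₗ[R] N,
      Function.Surjective (LocalizedModule.map p.asIdeal.primeCompl g)) :
    ∃ φ : M →ₗ[R] N, ∀ p ∈ s,
      Function.Surjective (LocalizedModule.map p.asIdeal.primeCompl φ) := by
  classical
  choose! g hg using h
  choose! e he using fun p (hp : p ∈ s) ↦
    PrimeSpectrum.exists_notMem_forall_mem_of_isAntichain hs hp
  refine ⟨∑ q ∈ s, e q • g q, fun p hp ↦ ?_⟩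
  let Rₚ := Localization.AtPrime p.asIdeal
  -- Modulo `𝔪ₚ`, only the summand `e p • g p` survives, and `e p` is a unit of `Rₚ`.
  have hrest : ∀ w, LocalizedModule.map p.asIdeal.primeCompl (∑ q ∈ s.erase p, e q • g q) w ∈
      maximalIdeal Rₚ •
        (⊤ : Submodule Rₚ (LocalizedModule p.asIdeal.primeCompl N)) := by
    intro w
    simp only [map_sum, map_smul, LinearMap.sum_apply, LinearMap.smul_apply]
    refine Submodule.sum_mem _ fun q hq ↦ ?_
    rw [← algebraMap_smul Rₚ (e q)]
    refine Submodule.smul_mem_smul ?_ trivial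
    exact (IsLocalization.AtPrime.to_map_mem_maximal_iff _ _ _).mpr
      ((he q (Finset.mem_of_mem_erase hq)).2 p hp (Finset.ne_of_mem_erase hq).symm)
  have hmain : Function.Surjective (LocalizedModule.map p.asIdeal.primeCompl (e p • g p)) := by
    rw [map_smul]
    exact ((Module.End.isUnit_iff _).mp (IsLocalizedModule.map_units
      (LocalizedModule.mkLinearMap p.asIdeal.primeCompl N)
      (⟨e p, (he p hp).1⟩ : p.asIdeal.primeCompl))).2.comp (hg p hp)
  refine LinearMap.surjective_of_surjective_comp_mkQ _ (maximalIdeal Rₚ)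
    (maximalIdeal_le_jacobson _) ?_
  intro z
  obtain ⟨w, hw⟩ := (Submodule.mkQ_surjective _).comp hmain z
  refine ⟨w, ?_⟩
  rw [← Finset.add_sum_erase s _ hp]
  simpa only [map_add, LinearMap.comp_apply, LinearMap.add_apply, Submodule.mkQ_apply,
    (Submodule.Quotient.mk_eq_zero _).mpr (hrest w), add_zero, Function.comp_apply] using hw

variable (S : Submonoid R) {r : ℕ}

noncomputable def LocalizedModule.piEquiv (ι : Type*) [Finite ι] :
    LocalizedModule S (ι → R) ≃ₗ[Localization S] (ι → Localization S) :=
  (IsLocalizedModule.iso S (LinearMap.pi fun i ↦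
    Algebra.linearMap R (Localization S) ∘ₗ LinearMap.proj i)).extendScalarsOfIsLocalization S
      (Localization S)

theorem exists_surjective_localizedMap_of_equiv
    (ψ : LocalizedModule S N ≃ₗ[Localization S] (Fin r → Localization S)) :
    ∃ g : (Fin r → R) →ₗ[R] N, Function.Surjective (LocalizedModule.map S g) := by
  obtain ⟨g, -, -, hg⟩ := Module.exists_localizedMap_surjective_of_surjective S
    (LocalizedModule.mkLinearMap S (Fin r → R)) (LocalizedModule.mkLinearMap S N)
    (ϕ := ((LocalizedModule.piEquiv S (Fin r)).trans ψ.symm).toLinearMap.restrictScalars R)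
    (LinearEquiv.surjective _)
  exact ⟨g, hg⟩

theorem bijective_localizedMap_of_surjective
    (ψ : LocalizedModule S N ≃ₗ[Localization S] (Fin r → Localization S))
    {φ : (Fin r → R) →ₗ[R] N} (hφ : Function.Surjective (LocalizedModule.map S φ)) :
    Function.Bijective (LocalizedModule.map S φ) :=
  have : Module.Finite (Localization S) (LocalizedModule S N) := Module.Finite.equiv ψ.symm
  ⟨OrzechProperty.injective_of_surjective_of_injective
    ((LocalizedModule.piEquiv S (Fin r)).trans ψ.symm).toLinearMap _ (LinearEquiv.injective _) hφ,
    hφ⟩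

theorem injective_of_injective_localizedMap [IsNoetherianRing R] {ι : Type*}
    {φ : (ι → R) →ₗ[R] N} {s : Set (PrimeSpectrum R)}
    (hs : ∀ p ∈ associatedPrimes R R, ∃ q ∈ s, p ≤ q.asIdeal)
    (h : ∀ q ∈ s, Function.Injective (LocalizedModule.map q.asIdeal.primeCompl φ)) :
    Function.Injective φ := by
  refine (injective_iff_map_eq_zero φ).mpr fun y hy ↦ ?_
  by_contra hy0
  obtain ⟨j, hj⟩ := Function.ne_iff.mp hy0
  obtain ⟨P, hP, hle⟩ := exists_le_isAssociatedPrime_of_isNoetherianRing R (y j) hj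
  obtain ⟨q, hq, hPq⟩ := hs P hP
  have hy1 : LocalizedModule.mk y (1 : q.asIdeal.primeCompl) = 0 :=
    h q hq (by rw [LocalizedModule.map_mk, hy, LocalizedModule.zero_mk, map_zero])
  obtain ⟨t, ht⟩ := LocalizedModule.mk_eq.mp (hy1.trans (LocalizedModule.zero_mk 1).symm)
  refine t.2 (hPq (hle ?_))
  rw [Submodule.mem_colon_singleton, Submodule.mem_bot]
  simpa [Submonoid.smul_def] using congrFun ht j

end LocalizedMap

section HasRankN

variable {R : Type} [CommRing R] {N : Type} [AddCommGroup N] [Module R N]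

theorem exists_injective_linearMap_of_hasRankN [IsNoetherianRing R] [Module.Finite R N] {r : ℕ}
    (hN : HasRankN R N r) {s : Finset (PrimeSpectrum R)}
    (hanti : IsAntichain (· ≤ ·) (s : Set (PrimeSpectrum R)))
    (hsA : ∀ q ∈ s, q.asIdeal ∈ associatedPrimes R R)
    (hs : ∀ p ∈ associatedPrimes R R, ∃ q ∈ s, p ≤ q.asIdeal) :
    ∃ φ : (Fin r → R) →ₗ[R] N,
      Function.Injective φ ∧ ∀ q ∈ s, q ∉ Module.support R (N ⧸ LinearMap.range φ) := by
  obtain ⟨φ, hφ⟩ := exists_surjective_localizedMap_of_isAntichain hanti fun q hq ↦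
    exists_surjective_localizedMap_of_equiv _ (hN q.asIdeal q.2 (hsA q hq)).some
  refine ⟨φ, injective_of_injective_localizedMap hs fun q hq ↦
    (bijective_localizedMap_of_surjective _ (hN q.asIdeal q.2 (hsA q hq)).some (hφ q hq)).1,
    fun q hq ↦ ?_⟩
  rw [Module.notMem_support_iff,
    ← LinearMap.localizedMap_surjective_iff_subsingleton_localized_coker]
  exact hφ q hq

theorem exists_hasRankN_of_isDomain [IsDomain R] [Module.Finite R N] : ∃ r, HasRankN R N r := by
  have : IsFractionRing R (Localization.AtPrime (⊥ : Ideal R)) := by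
    simpa [Ideal.primeCompl_bot] using Localization.isLocalization (M := (⊥ : Ideal R).primeCompl)
  let := IsFractionRing.toField R (K := Localization.AtPrime (⊥ : Ideal R))
  refine ⟨Module.finrank (Localization.AtPrime (⊥ : Ideal R))
    (LocalizedModule (⊥ : Ideal R).primeCompl N), fun p hp hpA ↦ ?_⟩
  obtain rfl : p = ⊥ := by
    obtain ⟨-, x, rfl⟩ := hpA
    have hx : x ≠ 0 := by
      rintro rfl
      exact hp.ne_top (by simp)
    have hcolon : (⊥ : Submodule R R).colon {x} = ⊥ := by
      ext a
      simp [Submodule.mem_colon_singleton, hx]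
    rw [hcolon, Ideal.radical_bot_of_isReduced]
  exact ⟨(Module.finBasis _ _).equivFun⟩

end HasRankN

namespace GbarQ

variable {R : Type} [CommRing R]

variable (R) in
noncomputable def ofIdx (x : FGIdx R) : GbarQ R :=
  Submodule.Quotient.mk (Finsupp.single x 1)

theorem ofIdx_eq_add {x y z : FGIdx R} {f : idxMod R x →ₗ[R] idxMod R y}
    {g : idxMod R y →ₗ[R] idxMod R z} (hf : Function.Injective f) (hg : Function.Surjective g)
    (hfg : Function.Exact f g) : ofIdx R y = ofIdx R x + ofIdx R z := by
  have hrel : Finsupp.single y 1 - Finsupp.single x 1 - Finsupp.single z 1 ∈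
      Submodule.span ℚ (gRelQbar R) :=
    Submodule.subset_span
      (Or.inl ⟨x, y, z, f, g, hf, hg, (LinearMap.exact_iff.mp hfg).symm, rfl⟩)
  rw [← sub_eq_zero, ← sub_sub]
  exact (Submodule.Quotient.mk_eq_zero _).mpr hrel

variable (R) in
def zeroIdx : FGIdx R := ⟨0, ⊤⟩

instance : Subsingleton (idxMod R (zeroIdx R)) :=
  Submodule.Quotient.subsingleton_iff.mpr rfl

theorem ofIdx_zeroIdx : ofIdx R (zeroIdx R) = 0 := by
  have h := ofIdx_eq_add (x := zeroIdx R) (y := zeroIdx R) (z := zeroIdx R) (f := 0) (g := 0)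
    (fun _ _ _ ↦ Subsingleton.elim _ _) (fun _ ↦ ⟨0, Subsingleton.elim _ _⟩)
    (fun _ ↦ by simp [Subsingleton.elim _ (0 : idxMod R (zeroIdx R))])
  exact left_eq_add.mp h

theorem ofIdx_congr {x y : FGIdx R} (e : idxMod R x ≃ₗ[R] idxMod R y) :
    ofIdx R x = ofIdx R y := by
  rw [ofIdx_eq_add (f := e.toLinearMap) (g := (0 : _ →ₗ[R] idxMod R (zeroIdx R))) e.injective
    (fun _ ↦ ⟨0, Subsingleton.elim _ _⟩) ((e.exact_zero_iff_surjective _).mpr e.surjective),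
    ofIdx_zeroIdx, add_zero]

open Classical in
variable (R) in
/-- The class `[M]` in `Ḡ(R)_ℚ`, with junk value `0` when `M` is not finitely generated. -/
noncomputable def cls (M : Type) [AddCommGroup M] [Module R M] : GbarQ R :=
  if h : ∃ x : FGIdx R, Nonempty (idxMod R x ≃ₗ[R] M) then ofIdx R h.choose else 0

section cls

variable {M M' : Type} [AddCommGroup M] [Module R M] [AddCommGroup M'] [Module R M']

theorem cls_eq_ofIdx {x : FGIdx R} (e : idxMod R x ≃ₗ[R] M) : cls R M = ofIdx R x := by
  have h : ∃ x : FGIdx R, Nonempty (idxMod R x ≃ₗ[R] M) := ⟨x, ⟨e⟩⟩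
  rw [cls, dif_pos h]
  exact ofIdx_congr (h.choose_spec.some.trans e.symm)

theorem classZeroQ_iff : ClassZeroQ R M ↔ cls R M = 0 := by
  refine ⟨fun h ↦ ?_, fun h x ⟨e⟩ ↦ (cls_eq_ofIdx e).symm.trans h⟩
  by_cases hx : ∃ x : FGIdx R, Nonempty (idxMod R x ≃ₗ[R] M)
  · obtain ⟨x, ⟨e⟩⟩ := hx
    exact (cls_eq_ofIdx e).trans (h x ⟨e⟩)
  · rw [cls, dif_neg hx]

theorem exists_idxMod_equiv [Module.Finite R M] :
    ∃ x : FGIdx R, Nonempty (idxMod R x ≃ₗ[R] M) := by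
  obtain ⟨n, f, hf⟩ := Module.Finite.exists_fin' R M
  exact ⟨⟨n, LinearMap.ker f⟩, ⟨f.quotKerEquivOfSurjective hf⟩⟩

theorem cls_congr [Module.Finite R M] (e : M ≃ₗ[R] M') : cls R M = cls R M' := by
  obtain ⟨x, ⟨ex⟩⟩ := exists_idxMod_equiv (R := R) (M := M)
  rw [cls_eq_ofIdx ex, cls_eq_ofIdx (ex.trans e)]

theorem cls_of_subsingleton [Subsingleton M] : cls R M = 0 := by
  rw [cls_eq_ofIdx (LinearEquiv.ofSubsingleton (idxMod R (zeroIdx R)) M), ofIdx_zeroIdx]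

theorem cls_eq_add_of_exact {M'' : Type} [AddCommGroup M''] [Module R M''] [Module.Finite R M]
    [Module.Finite R M'] [Module.Finite R M''] {f : M →ₗ[R] M'} {g : M' →ₗ[R] M''}
    (hf : Function.Injective f) (hg : Function.Surjective g) (hfg : Function.Exact f g) :
    cls R M' = cls R M + cls R M'' := by
  obtain ⟨x, ⟨ex⟩⟩ := exists_idxMod_equiv (R := R) (M := M)
  obtain ⟨y, ⟨ey⟩⟩ := exists_idxMod_equiv (R := R) (M := M')
  obtain ⟨z, ⟨ez⟩⟩ := exists_idxMod_equiv (R := R) (M := M'')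
  rw [cls_eq_ofIdx ex, cls_eq_ofIdx ey, cls_eq_ofIdx ez]
  refine ofIdx_eq_add (f := ey.symm.toLinearMap ∘ₗ f ∘ₗ ex.toLinearMap)
    (g := ez.symm.toLinearMap ∘ₗ g ∘ₗ ey.toLinearMap) ?_ ?_ ?_
  · exact ey.symm.injective.comp (hf.comp ex.injective)
  · exact ez.symm.surjective.comp (hg.comp ey.surjective)
  · exact Function.Exact.of_ladder_linearEquiv_of_exact (e₁ := ex.symm) (e₂ := ey.symm)
      (e₃ := ez.symm) (by ext; simp) (by ext; simp) hfg

theorem cls_self : cls R R = 0 := by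
  obtain ⟨x, ⟨e⟩⟩ := exists_idxMod_equiv (R := R) (M := R)
  rw [cls_eq_ofIdx e]
  exact (Submodule.Quotient.mk_eq_zero _).mpr (Submodule.subset_span (Or.inr ⟨x, ⟨e⟩, rfl⟩))

theorem cls_pi [Module.Finite R M] (n : ℕ) : cls R (Fin n → M) = n • cls R M := by
  induction n with
  | zero => rw [cls_of_subsingleton, zero_smul]
  | succ n ih =>
    rw [cls_congr (Fin.consLinearEquiv R (fun _ ↦ M)).symm, succ_nsmul, ← ih, add_comm]
    exact cls_eq_add_of_exact LinearMap.inl_injective LinearMap.snd_surjective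
      Function.Exact.inl_snd

end cls

section IsLocalRing

variable [IsLocalRing R] [IsNoetherianRing R]

theorem exists_cls_eq_nsmul_of_support_subset {C : Type} [AddCommGroup C] [Module R C]
    [hC : Module.Finite R C] (h : Module.support R C ⊆ {closedPoint R}) :
    ∃ d : ℕ, cls R C = d • cls R (R ⧸ maximalIdeal R) ∧ (Nontrivial C → d ≠ 0) := by
  induction hC using IsNoetherianRing.induction_on_isQuotientEquivQuotientPrime R with
  | subsingleton N =>
    exact ⟨0, by rw [cls_of_subsingleton, zero_smul], fun h ↦ (not_nontrivial N h).elim⟩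
  | quotient N p e =>
    have hp : p = closedPoint R := h (by
      rw [e.support_eq, Module.mem_support_iff_of_finite, Ideal.annihilator_quotient])
    subst hp
    exact ⟨1, by rw [one_smul]; exact cls_congr e, fun _ ↦ one_ne_zero⟩
  | exact N₁ N₂ N₃ f g hf hg hfg ih₁ ih₃ =>
    rw [Module.support_of_exact hfg hf hg, Set.union_subset_iff] at h
    obtain ⟨d₁, hd₁, hnt₁⟩ := ih₁ h.1
    obtain ⟨d₃, hd₃, hnt₃⟩ := ih₃ h.2
    refine ⟨d₁ + d₃, by rw [cls_eq_add_of_exact hf hg hfg, hd₁, hd₃, add_smul],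
      fun _ hd ↦ ?_⟩
    have : Subsingleton N₁ := not_nontrivial_iff_subsingleton.mp fun h ↦ hnt₁ h (by omega)
    have : Subsingleton N₃ := not_nontrivial_iff_subsingleton.mp fun h ↦ hnt₃ h (by omega)
    obtain ⟨y, hy⟩ := exists_ne (0 : N₂)
    obtain ⟨x, rfl⟩ := (hfg y).mp (Subsingleton.elim _ _)
    exact hy (by rw [Subsingleton.elim x 0, map_zero])

theorem cls_residueField_eq_zero [Ring.KrullDimLE 1 R]
    (hm : maximalIdeal R ∉ associatedPrimes R R) : cls R (R ⧸ maximalIdeal R) = 0 := by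
  obtain ⟨x, hxm, hx⟩ := exists_mem_nonZeroDivisors_of_notMem_associatedPrimes
    (I := maximalIdeal R) fun p hp hle ↦
      hm (by rwa [le_antisymm hle (le_maximalIdeal hp.isPrime.ne_top)])
  have hquot : cls R (R ⧸ Ideal.span {x}) = 0 := by
    rw [show Ideal.span {x} = LinearMap.range (LinearMap.toSpanSingleton R R x) from
      LinearMap.span_singleton_eq_range ..]
    have := cls_eq_add_of_exact
      ((injective_iff_map_eq_zero _).mpr fun a ↦ (mul_right_mem_nonZeroDivisors_eq_zero_iff hx).mp)
      (Submodule.mkQ_surjective _) (LinearMap.exact_map_mkQ_range (LinearMap.toSpanSingleton R R x))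
    rwa [cls_self, zero_add, eq_comm] at this
  obtain ⟨d, hd, hd0⟩ := exists_cls_eq_nsmul_of_support_subset
    (support_quotient_span_singleton_subset hx)
  have hnt : Nontrivial (R ⧸ Ideal.span {x}) :=
    Ideal.Quotient.nontrivial_iff.mpr
      (Ideal.span_singleton_eq_top.not.mpr ((mem_maximalIdeal x).mp hxm))
  rw [hquot, eq_comm, ← Nat.cast_smul_eq_nsmul ℚ] at hd
  exact (smul_eq_zero.mp hd).resolve_left (Nat.cast_ne_zero.mpr (hd0 hnt))

theorem cls_eq_zero_of_hasRankN [Ring.KrullDimLE 1 R] {N : Type} [AddCommGroup N] [Module R N]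
    [Module.Finite R N] {r : ℕ} (hN : HasRankN R N r) : cls R N = 0 := by
  suffices ∃ φ : (Fin r → R) →ₗ[R] N,
      Function.Injective φ ∧ cls R (N ⧸ LinearMap.range φ) = 0 by
    obtain ⟨φ, hφ, hcoker⟩ := this
    rw [cls_eq_add_of_exact hφ (Submodule.mkQ_surjective _) (LinearMap.exact_map_mkQ_range φ),
      cls_pi, cls_self, smul_zero, hcoker, add_zero]
  by_cases hm : maximalIdeal R ∈ associatedPrimes R R
  · obtain ⟨φ, hφ, hsupp⟩ := exists_injective_linearMap_of_hasRankN hN (s := {closedPoint R})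
      (by simp) (fun q hq ↦ by rwa [Finset.mem_singleton.mp hq]) fun p hp ↦
        ⟨closedPoint R, Finset.mem_singleton_self _, le_maximalIdeal hp.isPrime.ne_top⟩
    have : Subsingleton (N ⧸ LinearMap.range φ) := not_nontrivial_iff_subsingleton.mp fun _ ↦
      hsupp _ (Finset.mem_singleton_self _) (closedPoint_mem_support _ _)
    exact ⟨φ, hφ, cls_of_subsingleton⟩
  · let s := ((associatedPrimes.finite R R).preimage
      (f := PrimeSpectrum.asIdeal) fun _ _ _ _ h ↦ PrimeSpectrum.ext h).toFinset
    have hanti : IsAntichain (· ≤ ·) (s : Set (PrimeSpectrum R)) := by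
      intro p _ q hq hpq hle
      have hqmin := mem_minimalPrimes_of_ne_closedPoint (p := q) fun h ↦ by
        subst h
        exact hm (show (closedPoint R).asIdeal ∈ associatedPrimes R R by simpa [s] using hq)
      exact hpq (le_antisymm hle (hqmin.2 ⟨p.2, bot_le⟩ hle))
    obtain ⟨φ, hφ, hsupp⟩ := exists_injective_linearMap_of_hasRankN hN hanti
      (fun q hq ↦ by simpa [s] using hq)
      fun p hp ↦ ⟨⟨p, hp.isPrime⟩, by simpa [s] using hp, le_rfl⟩
    obtain ⟨d, hd, -⟩ := exists_cls_eq_nsmul_of_support_subset (C := N ⧸ LinearMap.range φ)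
      fun p hp ↦ by_contra fun hne ↦
        hsupp p (by simpa [s] using mem_associatedPrimes_of_ne_closedPoint hne) hp
    exact ⟨φ, hφ, by rw [hd, cls_residueField_eq_zero hm, smul_zero]⟩

end IsLocalRing

end GbarQ

theorem class_zero_of_rank_one_dim
    (R : Type) [CommRing R] [IsNoetherianRing R] [IsLocalRing R]
    (hdim : ringKrullDim R = 1) :
    (∀ (N : Type) [AddCommGroup N] [Module R N] [Module.Finite R N] (r : ℕ), HasRankN R N r → ClassZeroQ R N) ∧
    (IsDomain R → ∀ (N : Type) [AddCommGroup N] [Module R N] [Module.Finite R N], ClassZeroQ R N) := by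
  have : Ring.KrullDimLE 1 R := Ring.krullDimLE_iff.mpr hdim.le
  have hrank (N : Type) [AddCommGroup N] [Module R N] [Module.Finite R N] (r : ℕ)
      (hN : HasRankN R N r) : ClassZeroQ R N :=
    GbarQ.classZeroQ_iff.mpr (GbarQ.cls_eq_zero_of_hasRankN hN)
  refine ⟨hrank, fun _ N _ _ _ ↦ ?_⟩
  obtain ⟨r, hN⟩ := exists_hasRankN_of_isDomain (R := R) (N := N)
  exact hrank N r hN
end
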